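/- Let X be a complex topological vector space and Γ a set of continuous linear operators on X such that for all T, S ∈ Γ with T ≠ S there exists A ∈ Γ with T = A ∘ S. If Γ is diskcyclic, then Γ is disk transitive. -/

import Mathlib

/-!
Pick `a • T x ∈ U` in the disk orbit. If some `β • S x` with `S ≠ T` lies in `a⁻¹ • V`, then
writing `S = A ∘ T` gives `A (β • a • T x) = a • β • S x ∈ V`. Points contributed by `T` itself
lie in the closure of the disk hull `𝔻 • T x`, so it suffices to find orbit points outside that
closure which a disk scalar brings into `a⁻¹ • V`. They exist by density: up to topological
inseparability that closure is just the compact set `𝔻 • T x`, so a large multiple of a point of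
`a⁻¹ • V` avoids it. When `0 ∈ U` or `0 ∈ V`, small scalars settle the matter without the
factorization.
-/

open Filter Metric Set Topology
open scoped Pointwise

section DiskHull

variable {𝕜 X : Type*} [NontriviallyNormedField 𝕜] [AddCommGroup X] [Module 𝕜 X]

variable (𝕜) in
def diskHull (y : X) : Set X :=
  (· • y) '' closedBall (0 : 𝕜) 1

theorem smul_mem_diskHull {α : 𝕜} (hα : ‖α‖ ≤ 1) (y : X) : α • y ∈ diskHull 𝕜 y :=
  ⟨α, mem_closedBall_zero_iff.2 hα, rfl⟩

variable [TopologicalSpace X] [ContinuousSMul 𝕜 X]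

theorem exists_ne_zero_norm_le_one_smul_mem (p : X) {W : Set X} (hW : W ∈ 𝓝 0) :
    ∃ c : 𝕜, c ≠ 0 ∧ ‖c‖ ≤ 1 ∧ c • p ∈ W := by
  have hdisk : ∀ᶠ c : 𝕜 in 𝓝[≠] 0, c ∈ closedBall 0 1 :=
    nhdsWithin_le_nhds (closedBall_mem_nhds 0 one_pos)
  obtain ⟨c, hcW, hc1, hc0⟩ := ((absorbent_nhds_zero (𝕜 := 𝕜) hW).eventually_nhdsNE_zero p).and
    (hdisk.and eventually_mem_nhdsWithin) |>.exists
  exact ⟨c, hc0, mem_closedBall_zero_iff.1 hc1, hcW⟩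

theorem isCompact_diskHull [ProperSpace 𝕜] (y : X) : IsCompact (diskHull 𝕜 y) :=
  (isCompact_closedBall 0 1).image (continuous_id.smul continuous_const)

variable [IsTopologicalAddGroup X] [ProperSpace 𝕜]

theorem exists_one_le_norm_smul_notMem_closure_diskHull (y : X) {w : X}
    (hw : ¬Inseparable w 0) : ∃ c : 𝕜, 1 ≤ ‖c‖ ∧ c • w ∉ closure (diskHull 𝕜 y) := by
  by_cases hwK : w ∈ closure (diskHull 𝕜 y)
  swap
  · exact ⟨1, by simp, by simpa using hwK⟩
  obtain ⟨_, ⟨μ, hμ, rfl⟩, hμw⟩ := (isCompact_diskHull y).mem_closure_iff_exists_inseparable.1 hwK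
  rw [← SeparationQuotient.mk_eq_mk] at hw hμw
  rw [mem_closedBall_zero_iff] at hμ
  have hμ0 : μ ≠ 0 := by
    rintro rfl
    simp [← hμw] at hw
  obtain ⟨κ, hκ⟩ := NormedField.exists_one_lt_norm 𝕜
  refine ⟨κ / μ, ?_, fun hcw => ?_⟩
  · rw [norm_div]
    exact hκ.le.trans (le_div_self (norm_nonneg κ) (norm_pos_iff.2 hμ0) hμ)
  -- `(κ / μ) • w` is inseparable from `κ • y`, and from `ν • y` with `‖ν‖ ≤ 1 < ‖κ‖`; so `y ~ 0`.
  obtain ⟨_, ⟨ν, hν, rfl⟩, hνw⟩ := (isCompact_diskHull y).mem_closure_iff_exists_inseparable.1 hcw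
  rw [mem_closedBall_zero_iff] at hν
  rw [← SeparationQuotient.mk_eq_mk, SeparationQuotient.mk_smul, SeparationQuotient.mk_smul,
    ← hμw, SeparationQuotient.mk_smul, smul_smul, div_mul_cancel₀ _ hμ0] at hνw
  have hy : SeparationQuotient.mk y = 0 := by
    have hκν : κ - ν ≠ 0 := sub_ne_zero.2 fun h => by rw [h] at hκ; linarith
    rw [← smul_eq_zero_iff_right hκν, sub_smul, hνw, sub_self]
  apply hw
  rw [← hμw, SeparationQuotient.mk_smul, hy, smul_zero, SeparationQuotient.mk_zero]

theorem Dense.exists_notMem_closure_diskHull_smul_mem {D W : Set X} (hD : Dense D)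
    (hW : IsOpen W) (hW0 : (0 : X) ∉ W) (hWne : W.Nonempty) (y : X) :
    ∃ z ∈ D, z ∉ closure (diskHull 𝕜 y) ∧ ∃ α : 𝕜, ‖α‖ ≤ 1 ∧ α • z ∈ W := by
  obtain ⟨w, hw⟩ := hWne
  obtain ⟨c, hc1, hcw⟩ := exists_one_le_norm_smul_notMem_closure_diskHull (𝕜 := 𝕜) y
    (w := w) fun h => hW0 ((h.mem_open_iff hW).1 hw)
  have hc0 : c ≠ 0 := norm_pos_iff.1 (one_pos.trans_le hc1)
  obtain ⟨z, hzD, hzW, hzK⟩ := hD.exists_mem_open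
    ((hW.smul₀ hc0).inter isClosed_closure.isOpen_compl) ⟨c • w, smul_mem_smul_set hw, hcw⟩
  refine ⟨z, hzD, hzK, c⁻¹, ?_, (mem_smul_set_iff_inv_smul_mem₀ hc0 _ _).1 hzW⟩
  rw [norm_inv]
  exact inv_le_one_of_one_le₀ hc1

end DiskHull

section DiskTransitivity

variable {𝕜 X : Type*} [NontriviallyNormedField 𝕜] [AddCommGroup X] [Module 𝕜 X]
  [TopologicalSpace X]

def diskOrbit (Γ : Set (X →L[𝕜] X)) (x : X) : Set X :=
  {y | ∃ α : 𝕜, ‖α‖ ≤ 1 ∧ ∃ T ∈ Γ, y = α • T x}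

/-- `Γ` is disk transitive iff `DiskMeets Γ U V` for all nonempty open `U` and `V`. -/
def DiskMeets (Γ : Set (X →L[𝕜] X)) (U V : Set X) : Prop :=
  ∃ α : 𝕜, α ≠ 0 ∧ ‖α‖ ≤ 1 ∧ ∃ T ∈ Γ, (⇑T '' (α • U) ∩ V).Nonempty

variable {Γ : Set (X →L[𝕜] X)} {U V : Set X}

theorem DiskMeets.of_apply_smul_mem {u : X} {α : 𝕜} {T : X →L[𝕜] X} (hu : u ∈ U)
    (hα0 : α ≠ 0) (hα1 : ‖α‖ ≤ 1) (hT : T ∈ Γ) (hV : T (α • u) ∈ V) : DiskMeets Γ U V :=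
  ⟨α, hα0, hα1, T, hT, T (α • u), mem_image_of_mem T (smul_mem_smul_set hu), hV⟩

variable [ContinuousSMul 𝕜 X]

theorem DiskMeets.of_zero_mem_right {T : X →L[𝕜] X} (hT : T ∈ Γ) (hU : U.Nonempty)
    (hV : V ∈ 𝓝 0) : DiskMeets Γ U V := by
  obtain ⟨u, hu⟩ := hU
  obtain ⟨c, hc0, hc1, hcV⟩ := exists_ne_zero_norm_le_one_smul_mem (𝕜 := 𝕜) (T u) hV
  exact .of_apply_smul_mem hu hc0 hc1 hT (by rwa [map_smul])

theorem DiskMeets.of_zero_mem_left {x : X} (hx : Dense (diskOrbit Γ x)) (hU : U ∈ 𝓝 0)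
    (hV : IsOpen V) (hV0 : (0 : X) ∉ V) (hVne : V.Nonempty) : DiskMeets Γ U V := by
  obtain ⟨δ, hδ0, hδ1, hδU⟩ := exists_ne_zero_norm_le_one_smul_mem (𝕜 := 𝕜) x hU
  obtain ⟨_, ⟨β, hβ1, S, hS, rfl⟩, hβV⟩ :=
    hx.exists_mem_open (hV.smul₀ (inv_ne_zero hδ0)) hVne.smul_set
  rw [mem_smul_set_iff_inv_smul_mem₀ (inv_ne_zero hδ0), inv_inv] at hβV
  have hβ0 : β ≠ 0 := by
    rintro rfl
    simp_all
  refine .of_apply_smul_mem hδU hβ0 hβ1 hS ?_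
  rwa [map_smul, map_smul, smul_comm]

theorem DiskMeets.of_zero_notMem [IsTopologicalAddGroup X] [ProperSpace 𝕜]
    (hfac : ∀ T ∈ Γ, ∀ S ∈ Γ, T ≠ S → ∃ A ∈ Γ, T = A ∘L S) {x : X}
    (hx : Dense (diskOrbit Γ x)) (hU : IsOpen U) (hU0 : (0 : X) ∉ U) (hUne : U.Nonempty)
    (hV : IsOpen V) (hV0 : (0 : X) ∉ V) (hVne : V.Nonempty) : DiskMeets Γ U V := by
  obtain ⟨_, ⟨a, -, T, hT, rfl⟩, hu⟩ := hx.exists_mem_open hU hUne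
  have ha : a ≠ 0 := by
    rintro rfl
    simp_all
  have haV0 : (0 : X) ∉ a⁻¹ • V := by
    rwa [mem_smul_set_iff_inv_smul_mem₀ (inv_ne_zero ha), smul_zero]
  obtain ⟨_, ⟨β, hβ1, S, hS, rfl⟩, hSK, α, hα1, hαV⟩ :=
    hx.exists_notMem_closure_diskHull_smul_mem (𝕜 := 𝕜) (hV.smul₀ (inv_ne_zero ha)) haV0
      hVne.smul_set (T x)
  have hST : S ≠ T := by
    rintro rfl
    exact hSK (subset_closure (smul_mem_diskHull hβ1 _))
  obtain ⟨A, hA, rfl⟩ := hfac S hS T hT hST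
  have hαβ0 : α * β ≠ 0 := by
    rintro h
    rw [← mul_smul, h, zero_smul] at hαV
    exact haV0 hαV
  refine .of_apply_smul_mem hu hαβ0 ?_ hA ?_
  · rw [norm_mul]
    exact mul_le_one₀ hα1 (norm_nonneg _) hβ1
  · rw [mem_smul_set_iff_inv_smul_mem₀ (inv_ne_zero ha), inv_inv] at hαV
    rwa [map_smul, map_smul, smul_comm, mul_smul]

end DiskTransitivity

/-- If for all distinct `T, S ∈ Γ` there is `A ∈ Γ` with `T = A ∘ S`, then
diskcyclicity of `Γ` implies disk transitivity of `Γ`. -/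
theorem stmt_8 {X : Type*} [AddCommGroup X] [Module ℂ X] [TopologicalSpace X]
    [IsTopologicalAddGroup X] [ContinuousSMul ℂ X]
    (Γ : Set (X →L[ℂ] X))
    (hfac : ∀ T ∈ Γ, ∀ S ∈ Γ, T ≠ S → ∃ A ∈ Γ, T = A ∘L S)
    (hcyc : ∃ x : X, Dense {y : X | ∃ α : ℂ, ‖α‖ ≤ 1 ∧ ∃ T ∈ Γ, y = α • T x}) :
    ∀ U V : Set X, IsOpen U → IsOpen V → U.Nonempty → V.Nonempty →
      ∃ α : ℂ, α ≠ 0 ∧ ‖α‖ ≤ 1 ∧ ∃ T ∈ Γ, (⇑T '' (α • U) ∩ V).Nonempty := by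
  intro U V hU hV hUne hVne
  obtain ⟨x, hx : Dense (diskOrbit Γ x)⟩ := hcyc
  show DiskMeets Γ U V
  by_cases hV0 : (0 : X) ∈ V
  · obtain ⟨_, ⟨-, -, T, hT, -⟩, -⟩ := hx.exists_mem_open hU hUne
    exact .of_zero_mem_right hT hUne (hV.mem_nhds hV0)
  by_cases hU0 : (0 : X) ∈ U
  · exact .of_zero_mem_left hx (hU.mem_nhds hU0) hV hV0 hVne
  exact .of_zero_notMem hfac hx hU hU0 hUne hV hV0 hVne
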